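/- Substituting (T₀,T₁,T₂,T₃) = (s⁴, s³t, s²t², t⁴) into a general quadratic form q = ∑_{i≤j} c_{ij} T_i T_j yields a polynomial in s,t whose coefficients vanish simultaneously only if c₀₀ = c₀₁ = c₁₁ + c₀₂ = c₁₂ = c₂₂ + c₀₃ = c₁₃ = c₂₃ = c₃₃ = 0; hence q vanishes on the curve iff c₁₁ = −c₀₂, c₂₂ = −c₀₃ and all other coefficients vanish. -/

import Mathlib

open MvPolynomial

/-- The result of substituting (T₀,T₁,T₂,T₃) = (s⁴, s³t, s²t², t⁴) into the general
quadratic form q = ∑_{i≤j} c_{ij} T_i T_j, as a polynomial in s = X 0 and t = X 1. -/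
noncomputable def substQuartic {k : Type*} [Field k]
    (c00 c01 c02 c03 c11 c12 c13 c22 c23 c33 : k) : MvPolynomial (Fin 2) k :=
  let S : MvPolynomial (Fin 2) k := X 0
  let T : MvPolynomial (Fin 2) k := X 1
  let T0 := S ^ 4
  let T1 := S ^ 3 * T
  let T2 := S ^ 2 * T ^ 2
  let T3 := T ^ 4
  C c00 * T0 * T0 + C c01 * T0 * T1 + C c02 * T0 * T2 + C c03 * T0 * T3 +
    C c11 * T1 * T1 + C c12 * T1 * T2 + C c13 * T1 * T3 +
    C c22 * T2 * T2 + C c23 * T2 * T3 + C c33 * T3 * T3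

noncomputable def mexp (a b : ℕ) : Fin 2 →₀ ℕ := Finsupp.single 0 a + Finsupp.single 1 b

lemma mexp_app0 (a b : ℕ) : mexp a b 0 = a := by simp [mexp, Finsupp.single_apply]
lemma mexp_app1 (a b : ℕ) : mexp a b 1 = b := by simp [mexp, Finsupp.single_apply]

lemma mexp_eq_iff (a b a' b' : ℕ) : mexp a b = mexp a' b' ↔ a = a' ∧ b = b' := by
  constructor
  · intro h
    exact ⟨by rw [← mexp_app0 a b, h, mexp_app0], by rw [← mexp_app1 a b, h, mexp_app1]⟩
  · rintro ⟨rfl, rfl⟩; rfl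

lemma mexp_monomial {k : Type*} [Field k] (a b : ℕ) (c : k) :
    (monomial (mexp a b) c : MvPolynomial (Fin 2) k) = C c * X 0 ^ a * X 1 ^ b := by
  rw [mexp, X_pow_eq_monomial, X_pow_eq_monomial, C_apply, monomial_mul, monomial_mul,
    mul_one, mul_one, zero_add]

lemma substQuartic_expand {k : Type*} [Field k]
    (c00 c01 c02 c03 c11 c12 c13 c22 c23 c33 : k) :
    substQuartic c00 c01 c02 c03 c11 c12 c13 c22 c23 c33 =
      monomial (mexp 8 0) c00 + monomial (mexp 7 1) c01 + monomial (mexp 6 2) (c02 + c11) +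
      monomial (mexp 5 3) c12 + monomial (mexp 4 4) (c03 + c22) + monomial (mexp 3 5) c13 +
      monomial (mexp 2 6) c23 + monomial (mexp 0 8) c33 := by
  simp only [substQuartic, mexp_monomial, map_add]
  ring

/-- the substituted polynomial vanishes identically iff
c₀₀ = c₀₁ = c₁₂ = c₁₃ = c₂₃ = c₃₃ = 0, c₁₁ = −c₀₂ and c₂₂ = −c₀₃. -/
theorem stmt12 {k : Type*} [Field k]
    (c00 c01 c02 c03 c11 c12 c13 c22 c23 c33 : k) :
    substQuartic c00 c01 c02 c03 c11 c12 c13 c22 c23 c33 = 0 ↔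
      (c00 = 0 ∧ c01 = 0 ∧ c11 = -c02 ∧ c12 = 0 ∧ c22 = -c03 ∧ c13 = 0 ∧ c23 = 0 ∧
        c33 = 0) := by
  rw [substQuartic_expand]
  constructor
  · intro h
    have h1 := congrArg (coeff (mexp 8 0)) h
    have h2 := congrArg (coeff (mexp 7 1)) h
    have h3 := congrArg (coeff (mexp 6 2)) h
    have h4 := congrArg (coeff (mexp 5 3)) h
    have h5 := congrArg (coeff (mexp 4 4)) h
    have h6 := congrArg (coeff (mexp 3 5)) h
    have h7 := congrArg (coeff (mexp 2 6)) h
    have h8 := congrArg (coeff (mexp 0 8)) h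
    simp only [coeff_add, coeff_monomial, mexp_eq_iff, coeff_zero, if_true, if_false,
      and_self, if_pos, if_neg] at h1 h2 h3 h4 h5 h6 h7 h8
    norm_num at h1 h2 h3 h4 h5 h6 h7 h8
    refine ⟨h1, h2, by linear_combination h3, h4, by linear_combination h5, h6, h7, h8⟩
  · rintro ⟨rfl, rfl, rfl, rfl, rfl, rfl, rfl, rfl⟩
    simp
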